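/- Suppose that for every k with 0 ≤ k ≤ t the ADMM optimality conditions hold: (i) for all z ∈ Z, θ1(z) − θ1(z^{k+1}) + ⟨z − z^{k+1}, λ^k − β(Dx^k − z^{k+1})⟩ ≥ 0; (ii) for all x ∈ X, θ2(x) − θ2(x^{k+1}) + ⟨x − x^{k+1}, −Dᵀλ^k + βDᵀ(Dx^{k+1} − z^{k+1})⟩ ≥ 0; (iii) λ^{k+1} = λ^k − β(Dx^{k+1} − z^{k+1}). Then for every ω = (z, x, λ) ∈ Z × X × R^n, ∑_{k=0}^{t} [θ1(z^{k+1}) + θ2(x^{k+1})] − (t+1)[θ1(z) + θ2(x)] + ⟨∑_{k=0}^{t} ω^{k+1} − (t+1)ω, F(ω)⟩ ≤ (1/(2β))‖λ^0 − λ‖₂² + (β/2)‖Dx^0 − z‖₂², where ω^{k+1} = (z^{k+1}, x^{k+1}, λ^{k+1}). -/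

import Mathlib

open scoped RealInnerProductSpace

/-- Matrix-vector multiplication, landing in Euclidean space. -/
noncomputable def mulv {n d : ℕ} (A : Matrix (Fin n) (Fin d) ℝ)
    (x : EuclideanSpace ℝ (Fin d)) : EuclideanSpace ℝ (Fin n) := WithLp.toLp 2 (A.mulVec x)

/-- `θ₁(z) = ‖z‖₁`, the sum of absolute values of the entries of `z`. -/
noncomputable def theta1 {n : ℕ} (z : EuclideanSpace ℝ (Fin n)) : ℝ := ∑ i, |z i|

/-- `θ₂(x) = (α/2)‖y − Mx‖₂²`. -/
noncomputable def theta2 {m d : ℕ} (M : Matrix (Fin m) (Fin d) ℝ)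
    (y : EuclideanSpace ℝ (Fin m)) (α : ℝ) (x : EuclideanSpace ℝ (Fin d)) : ℝ :=
  α / 2 * ‖y - mulv M x‖ ^ 2

lemma mulv_sub {n d : ℕ} (A : Matrix (Fin n) (Fin d) ℝ) (a b : EuclideanSpace ℝ (Fin d)) :
    mulv A (a - b) = mulv A a - mulv A b := by
  ext i
  simp [mulv, Matrix.mulVec, dotProduct, mul_sub, Finset.sum_sub_distrib]

lemma mulv_smul {n d : ℕ} (A : Matrix (Fin n) (Fin d) ℝ) (c : ℝ) (a : EuclideanSpace ℝ (Fin d)) :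
    mulv A (c • a) = c • mulv A a := by
  ext i
  simp [mulv, Matrix.mulVec, dotProduct, Finset.mul_sum]
  congr 1; ext j; ring

lemma adj {n d : ℕ} (A : Matrix (Fin n) (Fin d) ℝ) (a : EuclideanSpace ℝ (Fin d))
    (b : EuclideanSpace ℝ (Fin n)) : ⟪a, mulv A.transpose b⟫ = ⟪mulv A a, b⟫ := by
  simp only [mulv, PiLp.inner_apply, RCLike.inner_apply, starRingEnd_apply, star_trivial,
    Matrix.mulVec, dotProduct, Matrix.transpose_apply, Finset.mul_sum, Finset.sum_mul]
  rw [Finset.sum_comm]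
  congr 1; ext i; congr 1; ext j; ring

section abstractE
variable {E : Type*} [NormedAddCommGroup E] [InnerProductSpace ℝ E]

lemma E3 (β : ℝ) (hβ : 0 ≤ β) (u v w : E) :
    β * ⟪w, u - v⟫ ≤ β/2 * ‖u‖^2 - β/2 * ‖v‖^2 + β/2 * ‖v - w‖^2 := by
  have key : ⟪w, u - v⟫ ≤ 1/2 * ‖u‖^2 - 1/2 * ‖v‖^2 + 1/2 * ‖v - w‖^2 := by
    have h0 : 0 ≤ ‖u - w‖^2 := sq_nonneg _
    rw [norm_sub_sq_real] at h0
    rw [norm_sub_sq_real v w, inner_sub_right]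
    linarith [real_inner_comm u w, real_inner_comm v w]
  nlinarith [mul_le_mul_of_nonneg_left key hβ]

lemma onestep (β : ℝ) (hβ : 0 < β) (θz θz' θx θx' : ℝ) (p q r s c l' l : E)
    (A : θz - θz' + ⟪s - r, l' + β • (q - p)⟫ ≥ 0)
    (B : θx - θx' - ⟪c - q, l'⟫ ≥ 0) :
    θz' + θx' - (θz + θx) +
      (⟪r - s, l⟫ + -⟪q - c, l⟫ + ⟪l' - l, c - s⟫) ≤
    1/(2*β) * (‖(l' + β • (q - r)) - l‖^2 - ‖l' - l‖^2) +
      β/2 * (‖p - s‖^2 - ‖q - s‖^2) := by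
  have hid : 1/(2*β) * (‖(l' + β • (q - r)) - l‖^2 - ‖l' - l‖^2)
      = ⟪q - r, l' - l⟫ + β/2 * ‖q - r‖^2 := by
    have h1 : (l' + β • (q - r)) - l = (l' - l) + β • (q - r) := by abel
    rw [h1, norm_add_sq_real, real_inner_smul_right, norm_smul]
    rw [Real.norm_eq_abs, abs_of_pos hβ, mul_pow, real_inner_comm]
    field_simp
    ring
  rw [hid]
  have hA' : θz' - θz + ⟪r - s, l'⟫ - β * ⟪s - r, q - p⟫ ≤ 0 := by
    rw [inner_add_right, real_inner_smul_right] at A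
    have e : ⟪s - r, l'⟫ = -⟪r - s, l'⟫ := by
      rw [← inner_neg_left, neg_sub]
    linarith [A, e.le, e.ge]
  have hB' : θx' - θx ≤ ⟪q - c, l'⟫ := by
    have e : ⟪c - q, l'⟫ = -⟪q - c, l'⟫ := by rw [← inner_neg_left, neg_sub]
    linarith
  have hE3 : β * ⟪s - r, q - p⟫ ≤ β/2 * ‖p - s‖^2 - β/2 * ‖q - s‖^2 + β/2 * ‖q - r‖^2 := by
    have h := E3 β hβ.le (p - s) (q - s) (r - s)
    have e1 : (p - s) - (q - s) = p - q := by abel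
    have e2 : (q - s) - (r - s) = q - r := by abel
    rw [e1, e2] at h
    have e3 : ⟪s - r, q - p⟫ = ⟪r - s, p - q⟫ := by
      rw [← neg_sub r s, ← neg_sub p q, inner_neg_neg]
    rw [e3]; exact h
  have hskew : ⟪r - s, l⟫ + -⟪q - c, l⟫ + ⟪l' - l, c - s⟫
      = ⟪r - s, l'⟫ - ⟪q - c, l'⟫ + ⟪q - r, l' - l⟫ := by
    simp only [inner_sub_left, inner_sub_right]
    linarith [real_inner_comm l' c, real_inner_comm l' s, real_inner_comm l' q,
      real_inner_comm l' r, real_inner_comm l c, real_inner_comm l s,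
      real_inner_comm l q, real_inner_comm l r]
  rw [hskew]
  linarith

end abstractE

/-- Summed form of the one-step ADMM inequality over `k = 0, …, t`. -/
theorem stmt_11 {n d m : ℕ} (D : Matrix (Fin n) (Fin d) ℝ) (M : Matrix (Fin m) (Fin d) ℝ)
    (y : EuclideanSpace ℝ (Fin m)) (α β : ℝ) (hα : 0 < α) (hβ : 0 < β)
    (Z : Set (EuclideanSpace ℝ (Fin n))) (X : Set (EuclideanSpace ℝ (Fin d)))
    (hZ : Convex ℝ Z) (hX : Convex ℝ X)
    (zseq : ℕ → EuclideanSpace ℝ (Fin n)) (xseq : ℕ → EuclideanSpace ℝ (Fin d))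
    (lseq : ℕ → EuclideanSpace ℝ (Fin n)) (t : ℕ)
    (hzZ : ∀ k ≤ t + 1, zseq k ∈ Z) (hxX : ∀ k ≤ t + 1, xseq k ∈ X)
    (h1 : ∀ k ≤ t, ∀ z ∈ Z, theta1 z - theta1 (zseq (k + 1)) +
      ⟪z - zseq (k + 1), lseq k - β • (mulv D (xseq k) - zseq (k + 1))⟫ ≥ 0)
    (h2 : ∀ k ≤ t, ∀ x ∈ X, theta2 M y α x - theta2 M y α (xseq (k + 1)) +
      ⟪x - xseq (k + 1), -(mulv D.transpose (lseq k)) +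
        β • mulv D.transpose (mulv D (xseq (k + 1)) - zseq (k + 1))⟫ ≥ 0)
    (h3 : ∀ k ≤ t, lseq (k + 1) = lseq k - β • (mulv D (xseq (k + 1)) - zseq (k + 1))) :
    ∀ z ∈ Z, ∀ x ∈ X, ∀ l : EuclideanSpace ℝ (Fin n),
      (∑ k ∈ Finset.range (t + 1), (theta1 (zseq (k + 1)) + theta2 M y α (xseq (k + 1)))) -
          ((t : ℝ) + 1) * (theta1 z + theta2 M y α x) +
        (⟪(∑ k ∈ Finset.range (t + 1), zseq (k + 1)) - ((t : ℝ) + 1) • z, l⟫ +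
          ⟪(∑ k ∈ Finset.range (t + 1), xseq (k + 1)) - ((t : ℝ) + 1) • x,
            -(mulv D.transpose l)⟫ +
          ⟪(∑ k ∈ Finset.range (t + 1), lseq (k + 1)) - ((t : ℝ) + 1) • l,
            mulv D x - z⟫) ≤
      (1 / (2 * β)) * ‖lseq 0 - l‖ ^ 2 + β / 2 * ‖mulv D (xseq 0) - z‖ ^ 2 := by
  intro z hz x hx l
  set f : ℕ → ℝ := fun k => 1/(2*β) * ‖lseq k - l‖^2 + β/2 * ‖mulv D (xseq k) - z‖^2 with hf
  have key : ∀ k ∈ Finset.range (t+1),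
      theta1 (zseq (k+1)) + theta2 M y α (xseq (k+1)) - (theta1 z + theta2 M y α x) +
        (⟪zseq (k+1) - z, l⟫ + -⟪mulv D (xseq (k+1)) - mulv D x, l⟫ +
          ⟪lseq (k+1) - l, mulv D x - z⟫)
      ≤ f k - f (k+1) := by
    intro k hk
    rw [Finset.mem_range] at hk
    have hk' : k ≤ t := Nat.lt_succ_iff.mp hk
    have h3k := h3 k hk'
    have hA := h1 k hk' z hz
    have hB := h2 k hk' x hx
    have eA : lseq k - β • (mulv D (xseq k) - zseq (k+1))
        = lseq (k+1) + β • (mulv D (xseq (k+1)) - mulv D (xseq k)) := by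
      rw [h3k]; module
    rw [eA] at hA
    have eB : -(mulv D.transpose (lseq k)) +
        β • mulv D.transpose (mulv D (xseq (k+1)) - zseq (k+1))
        = -(mulv D.transpose (lseq (k+1))) := by
      rw [h3k]; simp only [mulv_sub, mulv_smul]; module
    rw [eB] at hB
    have hB' : theta2 M y α x - theta2 M y α (xseq (k+1)) -
        ⟪mulv D x - mulv D (xseq (k+1)), lseq (k+1)⟫ ≥ 0 := by
      rw [inner_neg_right, adj, mulv_sub] at hB
      linarith
    have hcon := onestep β hβ (theta1 z) (theta1 (zseq (k+1)))
      (theta2 M y α x) (theta2 M y α (xseq (k+1)))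
      (mulv D (xseq k)) (mulv D (xseq (k+1))) (zseq (k+1)) z (mulv D x)
      (lseq (k+1)) l hA hB'
    have elk : lseq (k+1) + β • (mulv D (xseq (k+1)) - zseq (k+1)) = lseq k := by
      rw [h3k]; module
    rw [elk] at hcon
    simp only [hf]
    linarith
  have hsum_z : ⟪(∑ k ∈ Finset.range (t+1), zseq (k+1)) - ((t:ℝ)+1) • z, l⟫
      = ∑ k ∈ Finset.range (t+1), ⟪zseq (k+1) - z, l⟫ := by
    simp only [inner_sub_left, sum_inner, real_inner_smul_left,
      Finset.sum_sub_distrib, Finset.sum_const, Finset.card_range, nsmul_eq_mul]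
    push_cast; ring
  have hsum_l : ⟪(∑ k ∈ Finset.range (t+1), lseq (k+1)) - ((t:ℝ)+1) • l, mulv D x - z⟫
      = ∑ k ∈ Finset.range (t+1), ⟪lseq (k+1) - l, mulv D x - z⟫ := by
    simp only [inner_sub_left, sum_inner, real_inner_smul_left,
      Finset.sum_sub_distrib, Finset.sum_const, Finset.card_range, nsmul_eq_mul]
    push_cast; ring
  have hsum_x : ⟪(∑ k ∈ Finset.range (t+1), xseq (k+1)) - ((t:ℝ)+1) • x,
      -(mulv D.transpose l)⟫
      = ∑ k ∈ Finset.range (t+1), -⟪mulv D (xseq (k+1)) - mulv D x, l⟫ := by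
    rw [inner_neg_right, inner_sub_left, sum_inner, real_inner_smul_left, adj]
    simp only [adj, inner_sub_left, Finset.sum_neg_distrib]
    rw [Finset.sum_sub_distrib, Finset.sum_const, Finset.card_range, nsmul_eq_mul]
    push_cast; ring
  have htheta : ((t:ℝ)+1) * (theta1 z + theta2 M y α x)
      = ∑ _k ∈ Finset.range (t+1), (theta1 z + theta2 M y α x) := by
    rw [Finset.sum_const, Finset.card_range, nsmul_eq_mul]
    push_cast; ring
  rw [hsum_z, hsum_x, hsum_l, htheta]
  have hcomb : (∑ k ∈ Finset.range (t + 1), (theta1 (zseq (k + 1)) + theta2 M y α (xseq (k + 1)))) -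
      (∑ _k ∈ Finset.range (t+1), (theta1 z + theta2 M y α x)) +
      ((∑ k ∈ Finset.range (t+1), ⟪zseq (k+1) - z, l⟫) +
        (∑ k ∈ Finset.range (t+1), -⟪mulv D (xseq (k+1)) - mulv D x, l⟫) +
        (∑ k ∈ Finset.range (t+1), ⟪lseq (k+1) - l, mulv D x - z⟫))
      = ∑ k ∈ Finset.range (t+1),
        (theta1 (zseq (k+1)) + theta2 M y α (xseq (k+1)) - (theta1 z + theta2 M y α x) +
          (⟪zseq (k+1) - z, l⟫ + -⟪mulv D (xseq (k+1)) - mulv D x, l⟫ +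
            ⟪lseq (k+1) - l, mulv D x - z⟫)) := by
    simp only [← Finset.sum_sub_distrib, ← Finset.sum_add_distrib]
  rw [hcomb]
  have hle : (∑ k ∈ Finset.range (t+1),
        (theta1 (zseq (k+1)) + theta2 M y α (xseq (k+1)) - (theta1 z + theta2 M y α x) +
          (⟪zseq (k+1) - z, l⟫ + -⟪mulv D (xseq (k+1)) - mulv D x, l⟫ +
            ⟪lseq (k+1) - l, mulv D x - z⟫)))
      ≤ ∑ k ∈ Finset.range (t+1), (f k - f (k+1)) := Finset.sum_le_sum key
  have htel : ∑ k ∈ Finset.range (t+1), (f k - f (k+1)) = f 0 - f (t+1) :=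
    Finset.sum_range_sub' f (t+1)
  have hfnn : 0 ≤ f (t+1) := by
    simp only [hf]
    positivity
  have : f 0 = (1 / (2 * β)) * ‖lseq 0 - l‖ ^ 2 + β / 2 * ‖mulv D (xseq 0) - z‖ ^ 2 := by
    simp [hf]
  calc _ ≤ ∑ k ∈ Finset.range (t+1), (f k - f (k+1)) := hle
    _ = f 0 - f (t+1) := htel
    _ ≤ f 0 := by linarith
    _ = _ := this
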